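/- arXiv:2303.00565 — 3 statements merged into one kernel-verified Lean document; each statement's English description precedes it below -/
import Mathlib

section
/- Let 0 < ε ≤ G and let η : ℕ → ℝ^d be a sequence such that for every coordinate j the scalar sequence t ↦ (η_t)_j is nonincreasing and satisfies 1/G ≤ (η_t)_j ≤ 1/ε for all t. Then for every T ≥ 1, Σ_{t=0}^{T−1} ‖η_t − η_{t+1}‖² ≤ d(1/ε² − 1/G²), where ‖·‖ is the Euclidean norm. -/
open Finset

lemma sq_sub_le_sq_sub_sq {a b : ℝ} (hb : 0 ≤ b) (hba : b ≤ a) : (a - b) ^ 2 ≤ a ^ 2 - b ^ 2 := by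
  nlinarith

lemma sum_range_sq_sub_succ_le {f : ℕ → ℝ} {lo hi : ℝ} (hlo : 0 ≤ lo)
    (hmono : ∀ t, f (t + 1) ≤ f t) (hlb : ∀ t, lo ≤ f t) (hub : ∀ t, f t ≤ hi) (T : ℕ) :
    ∑ t ∈ range T, (f t - f (t + 1)) ^ 2 ≤ hi ^ 2 - lo ^ 2 := by
  have hf_nonneg (t : ℕ) : 0 ≤ f t := hlo.trans (hlb t)
  calc ∑ t ∈ range T, (f t - f (t + 1)) ^ 2
      ≤ ∑ t ∈ range T, (f t ^ 2 - f (t + 1) ^ 2) :=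
        sum_le_sum fun t _ => sq_sub_le_sq_sub_sq (hf_nonneg (t + 1)) (hmono t)
    _ = f 0 ^ 2 - f T ^ 2 := sum_range_sub' (fun t => f t ^ 2) T
    _ ≤ hi ^ 2 - lo ^ 2 :=
        sub_le_sub (pow_le_pow_left₀ (hf_nonneg 0) (hub 0) 2) (pow_le_pow_left₀ hlo (hlb T) 2)

lemma EuclideanSpace.sum_norm_sq_eq_sum_coord {α ι : Type*} [Fintype ι]
    (x : α → EuclideanSpace ℝ ι) (s : Finset α) :
    ∑ t ∈ s, ‖x t‖ ^ 2 = ∑ j, ∑ t ∈ s, x t j ^ 2 := by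
  simp only [EuclideanSpace.norm_sq_eq, Real.norm_eq_abs, sq_abs]
  exact sum_comm

theorem adasam_eta_sq_variation_general {d : ℕ} (ε G : ℝ)
    (hε : 0 < ε) (hεG : ε ≤ G)
    (η : ℕ → EuclideanSpace ℝ (Fin d))
    (hmono : ∀ t, ∀ j, η (t + 1) j ≤ η t j)
    (hlb : ∀ t, ∀ j, 1 / G ≤ η t j)
    (hub : ∀ t, ∀ j, η t j ≤ 1 / ε)
    (T : ℕ) :
    ∑ t ∈ Finset.range T, ‖η t - η (t + 1)‖ ^ 2
      ≤ (d : ℝ) * (1 / ε ^ 2 - 1 / G ^ 2) := by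
  calc ∑ t ∈ range T, ‖η t - η (t + 1)‖ ^ 2
      = ∑ j, ∑ t ∈ range T, (η t j - η (t + 1) j) ^ 2 :=
        EuclideanSpace.sum_norm_sq_eq_sum_coord (fun t => η t - η (t + 1)) _
    _ ≤ ∑ _j : Fin d, ((1 / ε) ^ 2 - (1 / G) ^ 2) :=
        sum_le_sum fun j _ => sum_range_sq_sub_succ_le (one_div_pos.mpr (hε.trans_le hεG)).le
          (fun t => hmono t j) (fun t => hlb t j) (fun t => hub t j) T
    _ = (d : ℝ) * (1 / ε ^ 2 - 1 / G ^ 2) := by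
        rw [sum_const, card_univ, Fintype.card_fin, nsmul_eq_mul, one_div_pow, one_div_pow]

/-- Telescoping squared-variation bound for the adaptive learning rates: if every coordinate
of `η_t` is nonincreasing in `t` and lies in `[1/G, 1/ε]` with `0 < ε ≤ G`, then for `T ≥ 1`,
`Σ_{t=0}^{T-1} ‖η_t − η_{t+1}‖² ≤ d(1/ε² − 1/G²)`, where `‖·‖` is the Euclidean norm. -/
theorem adasam_eta_sq_variation {d : ℕ} (hd : 1 ≤ d) (ε G : ℝ)
    (hε : 0 < ε) (hεG : ε ≤ G)
    (η : ℕ → EuclideanSpace ℝ (Fin d))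
    (hmono : ∀ t, ∀ j, η (t + 1) j ≤ η t j)
    (hlb : ∀ t, ∀ j, 1 / G ≤ η t j)
    (hub : ∀ t, ∀ j, η t j ≤ 1 / ε)
    (T : ℕ) (hT : 1 ≤ T) :
    ∑ t ∈ Finset.range T, ‖η t - η (t + 1)‖ ^ 2
      ≤ (d : ℝ) * (1 / ε ^ 2 - 1 / G ^ 2) :=
  adasam_eta_sq_variation_general ε G hε hεG η hmono hlb hub T
end

section
/- Let β₁ ∈ [0,1), γ ∈ ℝ, and let x₀, x₁, m₀, g, η₀, η₁ ∈ ℝ^d satisfy x₁ = x₀ − γ (m₀ ⊙ η₀). Set m₁ = β₁ m₀ + (1 − β₁) g and x₂ = x₁ − γ (m₁ ⊙ η₁). Define the auxiliary points z₁ = x₁ + (β₁/(1 − β₁))(x₁ − x₀) and z₂ = x₂ + (β₁/(1 − β₁))(x₂ − x₁). Then z₂ − z₁ = (γ β₁/(1 − β₁)) m₀ ⊙ (η₀ − η₁) − γ (g ⊙ η₁). -/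
/-!
The identity only uses that `⊙` is bilinear, so it holds for any bilinear map over a field.
With `c = β₁/(1−β₁)` one has `z₂ − z₁ = (1+c)(x₂−x₁) − c(x₁−x₀)`, and the factor `1+c = 1/(1−β₁)`
turns the momentum `m₁ = β₁m₀ + (1−β₁)g` into `c m₀ + g`; the `m₀`-terms then pair up into
`c γ m₀ ⊙ (η₀ − η₁)`.
-/

/-- The coordinatewise (Hadamard) product on `EuclideanSpace ℝ (Fin d)`. -/
noncomputable def had {d : ℕ} (x y : EuclideanSpace ℝ (Fin d)) : EuclideanSpace ℝ (Fin d) :=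
  (WithLp.equiv 2 (Fin d → ℝ)).symm (fun j => x j * y j)

/-- `had` as a bilinear map; `hadBilin d x y` unfolds to `had x y` by `rfl`. -/
noncomputable def hadBilin (d : ℕ) :
    EuclideanSpace ℝ (Fin d) →ₗ[ℝ] EuclideanSpace ℝ (Fin d) →ₗ[ℝ] EuclideanSpace ℝ (Fin d) :=
  ((LinearMap.mul ℝ (Fin d → ℝ)).compl₁₂ (WithLp.linearEquiv 2 ℝ (Fin d → ℝ)).toLinearMap
    (WithLp.linearEquiv 2 ℝ (Fin d → ℝ)).toLinearMap).compr₂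
    (WithLp.linearEquiv 2 ℝ (Fin d → ℝ)).symm.toLinearMap

section Momentum

variable {K M N P : Type*} [Field K] [AddCommGroup M] [Module K M]
    [AddCommGroup N] [Module K N] [AddCommGroup P] [Module K P]

theorem one_add_div_one_sub_smul_convexComb {β : K} (hβ : β ≠ 1) (a b : M) :
    (1 + β / (1 - β)) • (β • a + (1 - β) • b) = (β / (1 - β)) • a + b := by
  have hβ' : 1 - β ≠ 0 := sub_ne_zero.2 hβ.symm
  have h₁ : (1 + β / (1 - β)) * β = β / (1 - β) := by field_simp; ring
  have h₂ : (1 + β / (1 - β)) * (1 - β) = 1 := by field_simp; ring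
  simp only [smul_add, smul_smul, h₁, h₂, one_smul]

theorem extrapolate_sub_extrapolate (c : K) (x₀ x₁ x₂ : P) :
    x₂ + c • (x₂ - x₁) - (x₁ + c • (x₁ - x₀)) = (1 + c) • (x₂ - x₁) - c • (x₁ - x₀) := by
  module

theorem momentum_auxiliary_step (B : M →ₗ[K] N →ₗ[K] P) {β : K} (hβ : β ≠ 1) (γ : K)
    (x₀ x₁ : P) (m₀ g : M) (η₀ η₁ : N) (hx₁ : x₁ = x₀ - γ • B m₀ η₀) :
    let m₁ := β • m₀ + (1 - β) • g
    let x₂ := x₁ - γ • B m₁ η₁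
    x₂ + (β / (1 - β)) • (x₂ - x₁) - (x₁ + (β / (1 - β)) • (x₁ - x₀))
      = (γ * β / (1 - β)) • B m₀ (η₀ - η₁) - γ • B g η₁ := by
  intro m₁ x₂
  set c := β / (1 - β)
  have hstep₀ : x₁ - x₀ = -γ • B m₀ η₀ := by rw [hx₁]; module
  have hstep₁ : (1 + c) • (x₂ - x₁) = -γ • B (c • m₀ + g) η₁ := by
    rw [← one_add_div_one_sub_smul_convexComb hβ]
    simp only [x₂, map_smul, LinearMap.smul_apply]
    module
  rw [extrapolate_sub_extrapolate, hstep₀, hstep₁, mul_div_assoc]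
  simp only [map_add, map_sub, map_smul, LinearMap.add_apply, LinearMap.smul_apply]
  module

end Momentum

theorem adasam_auxiliary_step_general {d : ℕ} (β₁ γ : ℝ)
    (hβ₁ : β₁ ∈ Set.Ico (0 : ℝ) 1)
    (x₀ x₁ m₀ g η₀ η₁ : EuclideanSpace ℝ (Fin d))
    (hx₁ : x₁ = x₀ - γ • had m₀ η₀) :
    let m₁ := β₁ • m₀ + (1 - β₁) • g
    let x₂ := x₁ - γ • had m₁ η₁
    let z₁ := x₁ + (β₁ / (1 - β₁)) • (x₁ - x₀)
    let z₂ := x₂ + (β₁ / (1 - β₁)) • (x₂ - x₁)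
    z₂ - z₁ = (γ * β₁ / (1 - β₁)) • had m₀ (η₀ - η₁) - γ • had g η₁ :=
  momentum_auxiliary_step (hadBilin d) hβ₁.2.ne γ x₀ x₁ m₀ g η₀ η₁ hx₁

/-- One-step identity for the auxiliary sequence `z_t = x_t + (β₁/(1−β₁))(x_t − x_{t−1})`
of the AdaSAM analysis: with `x₁ = x₀ − γ m₀ ⊙ η₀`, `m₁ = β₁ m₀ + (1−β₁) g`,
`x₂ = x₁ − γ m₁ ⊙ η₁`, one has
`z₂ − z₁ = (γβ₁/(1−β₁)) m₀ ⊙ (η₀ − η₁) − γ (g ⊙ η₁)`. -/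
theorem adasam_auxiliary_step {d : ℕ} (hd : 1 ≤ d) (β₁ γ : ℝ)
    (hβ₁ : β₁ ∈ Set.Ico (0 : ℝ) 1)
    (x₀ x₁ m₀ g η₀ η₁ : EuclideanSpace ℝ (Fin d))
    (hx₁ : x₁ = x₀ - γ • had m₀ η₀) :
    let m₁ := β₁ • m₀ + (1 - β₁) • g
    let x₂ := x₁ - γ • had m₁ η₁
    let z₁ := x₁ + (β₁ / (1 - β₁)) • (x₁ - x₀)
    let z₂ := x₂ + (β₁ / (1 - β₁)) • (x₂ - x₁)
    z₂ - z₁ = (γ * β₁ / (1 - β₁)) • had m₀ (η₀ - η₁) - γ • had g η₁ :=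
  adasam_auxiliary_step_general β₁ γ hβ₁ x₀ x₁ m₀ g η₀ η₁ hx₁
end

section
/- Let B be a nonempty finite index set of cardinality b and let f_i : ℝ^d → ℝ (i ∈ B) be differentiable with L-Lipschitz gradients, and f : ℝ^d → ℝ differentiable. Let x ∈ ℝ^d with ∇f(x) ≠ 0, let s ∈ ℝ^d with s ≠ 0, let ρ ≥ 0, γ ≥ 0, μ > 0, ε > 0, and let η ∈ ℝ^d satisfy 0 ≤ η_j ≤ 1/ε for every coordinate j. Then ⟨∇f(x), (γ/b) Σ_{i∈B} [∇f_i(x + ρ ∇f(x)/‖∇f(x)‖) − ∇f_i(x + ρ s/‖s‖)] ⊙ η⟩ ≤ (γ/(2μ²)) ‖∇f(x) ⊙ √η‖² + 2μ²γL²ρ²/ε. -/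
open scoped RealInnerProductSpace

/-- The coordinatewise square root on `EuclideanSpace ℝ (Fin d)`. -/
noncomputable def vsqrt {d : ℕ} (x : EuclideanSpace ℝ (Fin d)) : EuclideanSpace ℝ (Fin d) :=
  (WithLp.equiv 2 (Fin d → ℝ)).symm (fun j => Real.sqrt (x j))


lemma euclid_sum_apply {d : ℕ} {ι : Type*} (w : Finset ι) (v : ι → EuclideanSpace ℝ (Fin d))
    (j : Fin d) : (∑ i ∈ w, v i) j = ∑ i ∈ w, v i j := by
  induction w using Finset.cons_induction with
  | empty => rfl
  | cons a t ha ih => rw [Finset.sum_cons, Finset.sum_cons, ← ih]; rfl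

lemma had_apply {d : ℕ} (x y : EuclideanSpace ℝ (Fin d)) (j : Fin d) :
    had x y j = x j * y j := rfl

lemma vsqrt_apply {d : ℕ} (x : EuclideanSpace ℝ (Fin d)) (j : Fin d) :
    vsqrt x j = Real.sqrt (x j) := rfl

set_option maxHeartbeats 1000000 in
/-- Bound on the SAM perturbation-mismatch term: for `f_i` with `L`-Lipschitz gradients, and
`η` coordinatewise in `[0, 1/ε]`,
`⟨∇f(x), (γ/b) Σ_i (∇f_i(x + ρ∇f(x)/‖∇f(x)‖) − ∇f_i(x + ρs/‖s‖)) ⊙ η⟩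
  ≤ (γ/(2μ²))‖∇f(x) ⊙ √η‖² + 2μ²γL²ρ²/ε`. -/
theorem sam_perturbation_mismatch_bound {d : ℕ} (hd : 1 ≤ d) {ι : Type*}
    (B : Finset ι) (hB : B.Nonempty) (b : ℕ) (hb : b = B.card)
    (f : EuclideanSpace ℝ (Fin d) → ℝ) (fi : ι → EuclideanSpace ℝ (Fin d) → ℝ) (L : ℝ)
    (hf : Differentiable ℝ f)
    (hfi : ∀ i ∈ B, Differentiable ℝ (fi i))
    (hfiL : ∀ i ∈ B, ∀ u v, ‖gradient (fi i) u - gradient (fi i) v‖ ≤ L * ‖u - v‖)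
    (x s : EuclideanSpace ℝ (Fin d)) (hx : gradient f x ≠ 0) (hs : s ≠ 0)
    (ρ γ μ ε : ℝ) (hρ : 0 ≤ ρ) (hγ : 0 ≤ γ) (hμ : 0 < μ) (hε : 0 < ε)
    (η : EuclideanSpace ℝ (Fin d)) (hη : ∀ j, 0 ≤ η j ∧ η j ≤ 1 / ε) :
    ⟪gradient f x,
        (γ / (b : ℝ)) • ∑ i ∈ B,
          had (gradient (fi i) (x + (ρ / ‖gradient f x‖) • gradient f x)
               - gradient (fi i) (x + (ρ / ‖s‖) • s)) η⟫
      ≤ γ / (2 * μ ^ 2) * ‖had (gradient f x) (vsqrt η)‖ ^ 2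
        + 2 * μ ^ 2 * γ * L ^ 2 * ρ ^ 2 / ε := by
  have hb0 : 0 < (b : ℝ) := by
    have : 0 < B.card := Finset.card_pos.mpr hB
    exact_mod_cast hb ▸ this
  obtain ⟨i0, hi0⟩ := hB
  set g := gradient f x with hgdef
  set u := x + (ρ / ‖g‖) • g with hu
  set v := x + (ρ / ‖s‖) • s with hv
  have hL : 0 ≤ L := by
    have h := hfiL i0 hi0 0 (EuclideanSpace.single ⟨0, hd⟩ 1)
    have hn : ‖(0 : EuclideanSpace ℝ (Fin d)) - EuclideanSpace.single (⟨0, hd⟩ : Fin d) (1:ℝ)‖ = 1 := by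
      rw [zero_sub, norm_neg, EuclideanSpace.norm_single]; norm_num
    rw [hn, mul_one] at h
    exact le_trans (norm_nonneg _) h
  have huv : ‖u - v‖ ≤ 2 * ρ := by
    have h1 : ‖(ρ / ‖g‖) • g‖ = ρ := by
      rw [norm_smul, Real.norm_eq_abs, abs_div, abs_of_nonneg hρ, abs_norm,
        div_mul_cancel₀ ρ (norm_ne_zero_iff.mpr hx)]
    have h2 : ‖(ρ / ‖s‖) • s‖ = ρ := by
      rw [norm_smul, Real.norm_eq_abs, abs_div, abs_of_nonneg hρ, abs_norm,
        div_mul_cancel₀ ρ (norm_ne_zero_iff.mpr hs)]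
    have huv' : u - v = (ρ / ‖g‖) • g - (ρ / ‖s‖) • s := by
      rw [hu, hv]; abel
    rw [huv']
    calc ‖(ρ / ‖g‖) • g - (ρ / ‖s‖) • s‖ ≤ ‖(ρ / ‖g‖) • g‖ + ‖(ρ / ‖s‖) • s‖ := norm_sub_le _ _
      _ = 2 * ρ := by rw [h1, h2]; ring
  set S : EuclideanSpace ℝ (Fin d) := ∑ i ∈ B, (gradient (fi i) u - gradient (fi i) v) with hS
  set D : EuclideanSpace ℝ (Fin d) := ((b : ℝ)⁻¹) • S with hD
  have hDle : ‖D‖ ≤ 2 * L * ρ := by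
    have hSle : ‖S‖ ≤ (b : ℝ) * (L * (2 * ρ)) := by
      calc ‖S‖ ≤ ∑ i ∈ B, ‖gradient (fi i) u - gradient (fi i) v‖ := norm_sum_le _ _
        _ ≤ ∑ i ∈ B, L * (2 * ρ) := by
            refine Finset.sum_le_sum fun i hi => ?_
            exact le_trans (hfiL i hi u v) (mul_le_mul_of_nonneg_left huv hL)
        _ = (b : ℝ) * (L * (2 * ρ)) := by rw [Finset.sum_const, hb]; simp [mul_comm]
    rw [hD, norm_smul, Real.norm_eq_abs, abs_inv, abs_of_pos hb0, inv_mul_le_iff₀ hb0]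
    calc ‖S‖ ≤ (b : ℝ) * (L * (2 * ρ)) := hSle
      _ = (b : ℝ) * (2 * L * ρ) := by ring
  have hSj : ∀ j, S j = ∑ i ∈ B, (gradient (fi i) u - gradient (fi i) v) j := by
    intro j
    rw [hS, euclid_sum_apply]
  have hLHS : ⟪g, (γ / (b : ℝ)) • ∑ i ∈ B,
      had (gradient (fi i) u - gradient (fi i) v) η⟫
      = ∑ j, γ * (g j * (η j * D j)) := by
    rw [real_inner_smul_right, PiLp.inner_apply, Finset.mul_sum]
    refine Finset.sum_congr rfl fun j _ => ?_
    have hw : (∑ i ∈ B, had (gradient (fi i) u - gradient (fi i) v) η) j = S j * η j := by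
      rw [euclid_sum_apply, hSj]
      simp only [had_apply]
      rw [← Finset.sum_mul]
    have hDj : D j = (b : ℝ)⁻¹ * S j := rfl
    simp only [RCLike.inner_apply, conj_trivial, hw, hDj, div_eq_mul_inv]
    ring
  rw [hLHS]
  have hnorm1 : ‖had g (vsqrt η)‖ ^ 2 = ∑ j, (g j * Real.sqrt (η j)) ^ 2 := by
    rw [← real_inner_self_eq_norm_sq, PiLp.inner_apply]
    refine Finset.sum_congr rfl fun j _ => ?_
    simp only [RCLike.inner_apply, conj_trivial, had_apply, vsqrt_apply]
    ring
  have hnorm2 : ‖D‖ ^ 2 = ∑ j, (D j) ^ 2 := by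
    rw [← real_inner_self_eq_norm_sq, PiLp.inner_apply]
    refine Finset.sum_congr rfl fun j _ => ?_
    simp only [RCLike.inner_apply, conj_trivial]; ring
  have main : ∑ j, γ * (g j * (η j * D j))
      ≤ γ / (2 * μ ^ 2) * ‖had g (vsqrt η)‖ ^ 2 + γ * μ ^ 2 / (2 * ε) * ‖D‖ ^ 2 := by
    rw [hnorm1, hnorm2, Finset.mul_sum, Finset.mul_sum, ← Finset.sum_add_distrib]
    refine Finset.sum_le_sum fun j _ => ?_
    obtain ⟨he0, he1⟩ := hη j
    have hq : Real.sqrt (η j) ^ 2 = η j := Real.sq_sqrt he0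
    have hμ2 : (0:ℝ) < 2 * μ ^ 2 := by positivity
    have core : g j * (η j * D j)
        ≤ 1 / (2 * μ ^ 2) * (g j * Real.sqrt (η j)) ^ 2 + μ ^ 2 / (2 * ε) * (D j) ^ 2 := by
      have key : 2 * μ ^ 2 * (g j * (η j * D j))
          ≤ (g j * Real.sqrt (η j)) ^ 2 + μ ^ 2 * μ ^ 2 * (η j * (D j) ^ 2) := by
        have hsq : (g j * Real.sqrt (η j)) ^ 2 = g j ^ 2 * η j := by rw [mul_pow, hq]
        nlinarith [mul_nonneg he0 (sq_nonneg (g j - μ ^ 2 * D j)), hsq]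
      have amgm : g j * (η j * D j)
          ≤ 1 / (2 * μ ^ 2) * (g j * Real.sqrt (η j)) ^ 2
            + μ ^ 2 / 2 * (η j * (D j) ^ 2) := by
        rw [show g j * (η j * D j) = 2 * μ ^ 2 * (g j * (η j * D j)) / (2 * μ ^ 2) by
          field_simp]
        calc 2 * μ ^ 2 * (g j * (η j * D j)) / (2 * μ ^ 2)
            ≤ ((g j * Real.sqrt (η j)) ^ 2 + μ ^ 2 * μ ^ 2 * (η j * (D j) ^ 2)) / (2 * μ ^ 2) :=
              (div_le_div_iff_of_pos_right hμ2).mpr key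
          _ = 1 / (2 * μ ^ 2) * (g j * Real.sqrt (η j)) ^ 2
              + μ ^ 2 / 2 * (η j * (D j) ^ 2) := by field_simp
      have step2 : μ ^ 2 / 2 * (η j * (D j) ^ 2) ≤ μ ^ 2 / (2 * ε) * (D j) ^ 2 := by
        have h3 : η j * (D j) ^ 2 ≤ (1 / ε) * (D j) ^ 2 :=
          mul_le_mul_of_nonneg_right he1 (sq_nonneg _)
        calc μ ^ 2 / 2 * (η j * (D j) ^ 2) ≤ μ ^ 2 / 2 * ((1 / ε) * (D j) ^ 2) :=
              mul_le_mul_of_nonneg_left h3 (by positivity)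
          _ = μ ^ 2 / (2 * ε) * (D j) ^ 2 := by field_simp
      linarith
    calc γ * (g j * (η j * D j))
        ≤ γ * (1 / (2 * μ ^ 2) * (g j * Real.sqrt (η j)) ^ 2 + μ ^ 2 / (2 * ε) * (D j) ^ 2) :=
          mul_le_mul_of_nonneg_left core hγ
      _ = γ / (2 * μ ^ 2) * (g j * Real.sqrt (η j)) ^ 2 + γ * μ ^ 2 / (2 * ε) * (D j) ^ 2 := by
          ring
  have hfinal : γ * μ ^ 2 / (2 * ε) * ‖D‖ ^ 2 ≤ 2 * μ ^ 2 * γ * L ^ 2 * ρ ^ 2 / ε := by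
    have h1 : ‖D‖ ^ 2 ≤ (2 * L * ρ) ^ 2 := by
      have h2 := norm_nonneg D
      nlinarith
    calc γ * μ ^ 2 / (2 * ε) * ‖D‖ ^ 2 ≤ γ * μ ^ 2 / (2 * ε) * (2 * L * ρ) ^ 2 :=
          mul_le_mul_of_nonneg_left h1 (by positivity)
      _ = 2 * μ ^ 2 * γ * L ^ 2 * ρ ^ 2 / ε := by field_simp
  linarith
end
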